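/- arXiv:1201.4849 — 4 statements merged into one kernel-verified Lean document; each statement's English description precedes it below -/
import Mathlib

section
/- For λ ∈ ℂ and integer z ≥ 0, define ψ_λ(z) = Σ_{y=0}^{z} q^{λ(2y-z)} / ((q)_y (q)_{z-y}), where (q)_n = (1-q)(1-q²)···(1-qⁿ) is the q-Pochhammer symbol and (q)_0 = 1. Then ψ_λ satisfies the difference equation (1 - q^{z+1}) ψ_λ(z+1) + ψ_λ(z-1) = (q^λ + q^{-λ}) ψ_λ(z) for all z ≥ 0, with the convention ψ_λ(-1) = 0. -/
open Finset

/-- The q-Pochhammer symbol `(q)ₙ = ∏_{k=1}^n (1 - q^k)`, viewed in `ℂ`. -/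
noncomputable def qPoch (q : ℝ) (n : ℕ) : ℂ :=
  ∏ k ∈ Finset.range n, (1 - (q : ℂ) ^ (k + 1))

/-- `q^w` for complex `w`, defined via the complex exponential. -/
noncomputable def qcpow (q : ℝ) (w : ℂ) : ℂ :=
  Complex.exp (w * Real.log q)

/-- The q-deformed Whittaker function `ψ_λ(z)`, extended by `0` to negative integers. -/
noncomputable def qWhittaker (q : ℝ) (lam : ℂ) : ℤ → ℂ := fun z =>
  if z < 0 then 0
  else ∑ y ∈ Finset.range (z.toNat + 1),
    qcpow q (lam * (2 * (y : ℂ) - (z.toNat : ℂ))) / (qPoch q y * qPoch q (z.toNat - y))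


/-! With `a = q^λ`, `ψ_λ(z)` is the coefficient of `tᶻ` in `F(t) = e_q(a t) e_q(a⁻¹ t)`, where
`e_q(a t) = ∑ aⁿ tⁿ / (q)ₙ`. Since `(1 - qⁿ) / (q)ₙ = 1 / (q)ₙ₋₁`, the q-exponential satisfies
`e_q(a q t) = (1 - a t) e_q(a t)`, hence `F(q t) = (1 - a t)(1 - a⁻¹ t) F(t)`. Comparing coefficients
of `t^{z+1}` in `F(t) - F(q t) = (a + a⁻¹) t F(t) - t² F(t)` gives the difference equation. -/

open PowerSeries

lemma qPoch_succ (q : ℝ) (n : ℕ) : qPoch q (n + 1) = qPoch q n * (1 - (q : ℂ) ^ (n + 1)) :=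
  prod_range_succ _ n

lemma qPoch_ne_zero {q : ℝ} (hq0 : 0 ≤ q) (hq1 : q < 1) (n : ℕ) : qPoch q n ≠ 0 := by
  refine prod_ne_zero_iff.2 fun k _ => sub_ne_zero.2 fun h => ?_
  have hlt : q ^ (k + 1) < 1 := pow_lt_one₀ hq0 hq1 k.succ_ne_zero
  exact hlt.ne (by exact_mod_cast h.symm)

lemma qcpow_add (q : ℝ) (v w : ℂ) : qcpow q (v + w) = qcpow q v * qcpow q w := by
  simp only [qcpow, add_mul, Complex.exp_add]

lemma qcpow_natCast_mul (q : ℝ) (n : ℕ) (w : ℂ) : qcpow q (n * w) = qcpow q w ^ n := by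
  simp only [qcpow, mul_assoc, Complex.exp_nat_mul]

lemma qcpow_mul_qcpow_neg (q : ℝ) (w : ℂ) : qcpow q w * qcpow q (-w) = 1 := by
  rw [← qcpow_add, add_neg_cancel, qcpow, zero_mul, Complex.exp_zero]

noncomputable def qExpSeries (q : ℝ) (a : ℂ) : PowerSeries ℂ :=
  mk fun n => a ^ n / qPoch q n

lemma rescale_qExpSeries {q : ℝ} (hq : ∀ n, qPoch q n ≠ 0) (a : ℂ) :
    rescale (q : ℂ) (qExpSeries q a) = (1 - C a * X) * qExpSeries q a := by
  ext (_ | n)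
  · simp [qExpSeries]
  · have hqn : 1 - (q : ℂ) ^ (n + 1) ≠ 0 := right_ne_zero_of_mul (qPoch_succ q n ▸ hq (n + 1))
    rw [coeff_rescale, sub_mul, one_mul, mul_assoc, map_sub, coeff_C_mul, coeff_succ_X_mul]
    simp only [qExpSeries, coeff_mk, qPoch_succ]
    field_simp [hq n]
    ring

lemma coeff_succ_qExpSeries_mul {q : ℝ} (hq : ∀ n, qPoch q n ≠ 0) (a b : ℂ) (n : ℕ) :
    (1 - (q : ℂ) ^ (n + 1)) * coeff (n + 1) (qExpSeries q a * qExpSeries q b)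
      = (a + b) * coeff n (qExpSeries q a * qExpSeries q b)
        - a * b * coeff n (X * (qExpSeries q a * qExpSeries q b)) := by
  set F := qExpSeries q a * qExpSeries q b
  have hF : rescale (q : ℂ) F = F - C (a + b) * (X * F) + C (a * b) * (X * (X * F)) := by
    rw [map_mul, rescale_qExpSeries hq, rescale_qExpSeries hq, map_add, map_mul]
    ring
  have h := congrArg (coeff (n + 1)) hF
  simp only [coeff_rescale, map_add, map_sub, add_mul, coeff_C_mul, coeff_succ_X_mul] at h
  linear_combination -h

lemma qWhittaker_natCast (q : ℝ) (lam : ℂ) (z : ℕ) :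
    qWhittaker q lam z
      = coeff z (qExpSeries q (qcpow q lam) * qExpSeries q (qcpow q (-lam))) := by
  rw [qWhittaker, if_neg (by omega), Int.toNat_natCast, coeff_mul,
    Nat.sum_antidiagonal_eq_sum_range_succ_mk]
  refine sum_congr rfl fun y hy => ?_
  have hyz : y ≤ z := Nat.lt_succ_iff.1 (mem_range.1 hy)
  have hexp : lam * (2 * (y : ℂ) - z) = y * lam + ((z - y : ℕ) : ℂ) * (-lam) := by
    push_cast [hyz]
    ring
  rw [hexp, qcpow_add, qcpow_natCast_mul, qcpow_natCast_mul, qExpSeries, qExpSeries,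
    coeff_mk, coeff_mk, mul_div_mul_comm]

lemma qWhittaker_natCast_sub_one (q : ℝ) (lam : ℂ) (z : ℕ) :
    qWhittaker q lam ((z : ℤ) - 1)
      = coeff z (X * (qExpSeries q (qcpow q lam) * qExpSeries q (qcpow q (-lam)))) := by
  cases z with
  | zero => simp [qWhittaker]
  | succ n => rw [coeff_succ_X_mul, ← qWhittaker_natCast]; push_cast; ring_nf

/-- The difference equation
`(1 - q^{z+1}) ψ_λ(z+1) + ψ_λ(z-1) = (q^λ + q^{-λ}) ψ_λ(z)`, with `ψ_λ(-1) = 0`. -/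
theorem qWhittaker_difference_equation (q : ℝ) (hq0 : 0 < q) (hq1 : q < 1)
    (lam : ℂ) (z : ℕ) :
    (1 - (q : ℂ) ^ (z + 1)) * qWhittaker q lam ((z : ℤ) + 1)
        + qWhittaker q lam ((z : ℤ) - 1)
      = (qcpow q lam + qcpow q (-lam)) * qWhittaker q lam (z : ℤ) := by
  have h := coeff_succ_qExpSeries_mul (qPoch_ne_zero hq0.le hq1) (qcpow q lam) (qcpow q (-lam)) z
  rw [qcpow_mul_qcpow_neg, one_mul] at h
  rw [← Nat.cast_succ, qWhittaker_natCast, qWhittaker_natCast, qWhittaker_natCast_sub_one]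
  linear_combination h
end

section
/- (Rank-one intertwining for the quantum Toda chain, n = 2.) Let H^{(2)} = ∂²/∂x_1² + ∂²/∂x_2² - 2e^{x_2 - x_1} acting on smooth functions of (x_1,x_2) ∈ ℝ², and for θ ∈ ℂ define the kernel Q_θ(x,y) = exp(θ(x_1 + x_2 - y) - e^{y - x_1} - e^{x_2 - y}) on ℝ² × ℝ. Then for all x ∈ ℝ² and y ∈ ℝ: (H^{(2)}_x - θ²) Q_θ(x,y) = ∂²/∂y² Q_θ(x,y), where H^{(2)}_x acts in the x variables. -/
noncomputable def Qtoda (θ : ℂ) (x1 x2 y : ℝ) : ℂ :=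
  Complex.exp (θ * ((x1 : ℂ) + (x2 : ℂ) - (y : ℂ))
    - (Real.exp (y - x1) : ℂ) - (Real.exp (x2 - y) : ℂ))

/-! Write `Q = exp φ`; each second partial derivative of `Q` is then `(∂²φ + (∂φ)²) Q`.
With `a = e^{y-x₁}` and `b = e^{x₂-y}` one has `∂₁φ = θ + a`, `∂₂φ = θ - b`, `∂_yφ = -θ - a + b`
and `∂²₁φ = -a`, `∂²₂φ = -b`, `∂²_yφ = -a - b`. Since the potential is `2e^{x₂-x₁} = 2ab`, it turns
`(θ + a)² + (θ - b)² - θ²` into `(θ + a - b)²`, and both sides equal `((θ + a - b)² - a - b) Q`. -/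

open Complex

theorem deriv_deriv_cexp {𝕜 : Type*} [NontriviallyNormedField 𝕜] [NormedAlgebra 𝕜 ℂ]
    {f f' : 𝕜 → ℂ} {f'' : ℂ} {x : 𝕜} (hf : ∀ t, HasDerivAt f (f' t) t)
    (hf' : HasDerivAt f' f'' x) :
    deriv (deriv fun t => exp (f t)) x = (f'' + f' x ^ 2) * exp (f x) := by
  have hderiv : deriv (fun t => exp (f t)) = fun t => exp (f t) * f' t :=
    funext fun t => ((hf t).cexp).deriv
  rw [hderiv, (((hf x).cexp).fun_mul hf').deriv]
  ring

theorem hasDerivAt_ofReal (t : ℝ) : HasDerivAt (fun s : ℝ => (s : ℂ)) 1 t := by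
  simpa using (hasDerivAt_id t).ofReal_comp

theorem hasDerivAt_ofReal_exp_sub_const (c t : ℝ) :
    HasDerivAt (fun s : ℝ => (Real.exp (s - c) : ℂ)) (Real.exp (t - c) : ℂ) t := by
  simpa using (((hasDerivAt_id t).sub_const c).exp).ofReal_comp

theorem hasDerivAt_ofReal_exp_const_sub (c t : ℝ) :
    HasDerivAt (fun s : ℝ => (Real.exp (c - s) : ℂ)) (-Real.exp (c - t) : ℂ) t := by
  simpa using (((hasDerivAt_id t).const_sub c).exp).ofReal_comp

noncomputable def todaPhase (θ : ℂ) (x1 x2 y : ℝ) : ℂ :=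
  θ * ((x1 : ℂ) + (x2 : ℂ) - (y : ℂ)) - (Real.exp (y - x1) : ℂ) - (Real.exp (x2 - y) : ℂ)

theorem Qtoda_eq_cexp_todaPhase (θ : ℂ) (x1 x2 y : ℝ) :
    Qtoda θ x1 x2 y = exp (todaPhase θ x1 x2 y) :=
  rfl

theorem hasDerivAt_todaPhase_x1 (θ : ℂ) (x2 y t : ℝ) :
    HasDerivAt (fun s => todaPhase θ s x2 y) (θ + Real.exp (y - t)) t :=
  (((((hasDerivAt_ofReal t).add_const _).sub_const _).const_mul θ).sub
    (hasDerivAt_ofReal_exp_const_sub y t)).sub_const _ |>.congr_deriv (by ring)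

theorem hasDerivAt_todaPhase_x2 (θ : ℂ) (x1 y t : ℝ) :
    HasDerivAt (fun s => todaPhase θ x1 s y) (θ - Real.exp (t - y)) t :=
  (((((hasDerivAt_ofReal t).const_add _).sub_const _).const_mul θ).sub_const _).sub
    (hasDerivAt_ofReal_exp_sub_const y t) |>.congr_deriv (by ring)

theorem hasDerivAt_todaPhase_y (θ : ℂ) (x1 x2 t : ℝ) :
    HasDerivAt (fun s => todaPhase θ x1 x2 s) (-θ - Real.exp (t - x1) + Real.exp (x2 - t)) t :=
  ((((hasDerivAt_ofReal t).const_sub _).const_mul θ).sub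
    (hasDerivAt_ofReal_exp_sub_const x1 t)).sub (hasDerivAt_ofReal_exp_const_sub x2 t)
    |>.congr_deriv (by ring)

/-- Rank-one intertwining for the quantum Toda chain (`n = 2`):
`(H^{(2)}_x - θ²) Q_θ(x,y) = ∂²_y Q_θ(x,y)` pointwise, where
`H^{(2)} = ∂²_{x₁} + ∂²_{x₂} - 2e^{x₂-x₁}`. -/
theorem toda_intertwining_rank_one (θ : ℂ) (x1 x2 y : ℝ) :
    deriv (deriv fun t => Qtoda θ t x2 y) x1
      + deriv (deriv fun t => Qtoda θ x1 t y) x2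
      - 2 * (Real.exp (x2 - x1) : ℂ) * Qtoda θ x1 x2 y
      - θ ^ 2 * Qtoda θ x1 x2 y
    = deriv (deriv fun t => Qtoda θ x1 x2 t) y := by
  have hpotential : (Real.exp (x2 - x1) : ℂ) = Real.exp (y - x1) * Real.exp (x2 - y) := by
    rw [← ofReal_mul, ← Real.exp_add]
    ring_nf
  simp only [Qtoda_eq_cexp_todaPhase]
  rw [deriv_deriv_cexp (hasDerivAt_todaPhase_x1 θ x2 y)
      ((hasDerivAt_ofReal_exp_const_sub y x1).const_add θ),
    deriv_deriv_cexp (hasDerivAt_todaPhase_x2 θ x1 y)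
      ((hasDerivAt_ofReal_exp_sub_const y x2).const_sub θ),
    deriv_deriv_cexp (hasDerivAt_todaPhase_y θ x1 x2)
      (((hasDerivAt_ofReal_exp_sub_const x1 y).const_sub (-θ)).add
        (hasDerivAt_ofReal_exp_const_sub x2 y)),
    hpotential]
  ring
end

section
/- (Kernel intertwining identity, general n.) For n ≥ 2 and θ ∈ ℂ, let Q_θ(x,y) = exp(θ(Σ_{i=1}^n x_i − Σ_{i=1}^{n-1} y_i) − Σ_{i=1}^{n-1}(e^{y_i − x_i} + e^{x_{i+1} − y_i})) for x ∈ ℝⁿ, y ∈ ℝ^{n-1}. Let H^{(n)}_x = Σ_{i=1}^n ∂²_{x_i} − 2Σ_{i=1}^{n-1} e^{x_{i+1}−x_i} and H^{(n-1)}_y = Σ_{i=1}^{n-1} ∂²_{y_i} − 2Σ_{i=1}^{n-2} e^{y_{i+1}−y_i}. Then pointwise (H^{(n)}_x − θ²) Q_θ(x,y) = H^{(n-1)}_y Q_θ(x,y). -/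
open Finset

/-- The quantum Toda intertwining kernel for `n = m + 2`:
`Q_θ(x,y) = exp(θ(Σxᵢ - Σyᵢ) - Σᵢ(e^{yᵢ-xᵢ} + e^{x_{i+1}-yᵢ}))`. -/
noncomputable def QtodaN (m : ℕ) (θ : ℂ) (x : Fin (m + 2) → ℝ) (y : Fin (m + 1) → ℝ) : ℂ :=
  Complex.exp (θ * ((∑ i, (x i : ℂ)) - ∑ i, (y i : ℂ))
    - ∑ i : Fin (m + 1),
        ((Real.exp (y i - x i.castSucc) : ℂ) + (Real.exp (x i.succ - y i) : ℂ)))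

/-- Second partial derivative of `f` in the `i`-th coordinate, at `x`. -/
noncomputable def pderiv2 {k : ℕ} (f : (Fin k → ℝ) → ℂ) (i : Fin k) (x : Fin k → ℝ) : ℂ :=
  deriv (deriv fun t => f (Function.update x i t)) (x i)


lemma master_hasDerivAt (a b c d : ℂ) (t : ℝ) :
    HasDerivAt (fun s : ℝ => Complex.exp (a * s + b - (c * Complex.exp (-(s:ℂ)) + d * Complex.exp (s:ℂ))))
      ((a + c * Complex.exp (-(t:ℂ)) - d * Complex.exp (t:ℂ)) *
        Complex.exp (a * t + b - (c * Complex.exp (-(t:ℂ)) + d * Complex.exp (t:ℂ)))) t := by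
  have hr : HasDerivAt (fun s : ℝ => (s : ℂ)) 1 t := Complex.ofRealCLM.hasDerivAt
  have h1 : HasDerivAt (fun s : ℝ => a * s + b - (c * Complex.exp (-(s:ℂ)) + d * Complex.exp (s:ℂ)))
      (a + c * Complex.exp (-(t:ℂ)) - d * Complex.exp (t:ℂ)) t := by
    have := (((hr.const_mul a).add_const b).sub
      (((hr.neg.cexp.const_mul c)).add (hr.cexp.const_mul d)))
    refine this.congr_deriv ?_
    simp only [Pi.neg_apply]
    ring
  simpa [mul_comm] using h1.cexp

lemma master (a b c d : ℂ) (t : ℝ) :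
    deriv (deriv fun s : ℝ => Complex.exp (a * s + b - (c * Complex.exp (-(s:ℂ)) + d * Complex.exp (s:ℂ)))) t
    = ((a + c * Complex.exp (-(t:ℂ)) - d * Complex.exp (t:ℂ))^2
        - (c * Complex.exp (-(t:ℂ)) + d * Complex.exp (t:ℂ)))
      * Complex.exp (a * t + b - (c * Complex.exp (-(t:ℂ)) + d * Complex.exp (t:ℂ))) := by
  have hd : (deriv fun s : ℝ => Complex.exp (a * s + b - (c * Complex.exp (-(s:ℂ)) + d * Complex.exp (s:ℂ))))
      = fun s : ℝ => (a + c * Complex.exp (-(s:ℂ)) - d * Complex.exp (s:ℂ)) *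
        Complex.exp (a * s + b - (c * Complex.exp (-(s:ℂ)) + d * Complex.exp (s:ℂ))) := by
    funext s; exact (master_hasDerivAt a b c d s).deriv
  rw [hd]
  have hr : HasDerivAt (fun s : ℝ => (s : ℂ)) 1 t := Complex.ofRealCLM.hasDerivAt
  have h2 : HasDerivAt (fun s : ℝ => a + c * Complex.exp (-(s:ℂ)) - d * Complex.exp (s:ℂ))
      (-(c * Complex.exp (-(t:ℂ))) - d * Complex.exp (t:ℂ)) t := by
    have := ((hr.neg.cexp.const_mul c).const_add a).sub (hr.cexp.const_mul d)
    refine this.congr_deriv ?_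
    simp only [Pi.neg_apply]
    ring
  have := h2.mul (master_hasDerivAt a b c d t)
  refine this.deriv.trans ?_
  ring

lemma pd2x (m : ℕ) (θ : ℂ) (x : Fin (m + 2) → ℝ) (y : Fin (m + 1) → ℝ) (k : Fin (m + 2)) :
    pderiv2 (fun x' => QtodaN m θ x' y) k x
    = ((θ + (∑ i ∈ univ.filter (fun i : Fin (m+1) => i.castSucc = k), (Real.exp (y i - x i.castSucc) : ℂ))
            - (∑ i ∈ univ.filter (fun i : Fin (m+1) => i.succ = k), (Real.exp (x i.succ - y i) : ℂ)))^2
        - ((∑ i ∈ univ.filter (fun i : Fin (m+1) => i.castSucc = k), (Real.exp (y i - x i.castSucc) : ℂ))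
            + (∑ i ∈ univ.filter (fun i : Fin (m+1) => i.succ = k), (Real.exp (x i.succ - y i) : ℂ))))
      * QtodaN m θ x y := by
  set c₀ : ℂ := ∑ i ∈ univ.filter (fun i : Fin (m+1) => i.castSucc = k), (Real.exp (y i) : ℂ) with hc₀
  set d₀ : ℂ := ∑ i ∈ univ.filter (fun i : Fin (m+1) => i.succ = k), (Real.exp (-(y i)) : ℂ) with hd₀
  set r1 : ℂ := ∑ i ∈ univ.filter (fun i : Fin (m+1) => ¬ i.castSucc = k), (Real.exp (y i - x i.castSucc) : ℂ) with hr1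
  set r2 : ℂ := ∑ i ∈ univ.filter (fun i : Fin (m+1) => ¬ i.succ = k), (Real.exp (x i.succ - y i) : ℂ) with hr2
  set b₀ : ℂ := θ * ((∑ i ∈ univ.erase k, (x i : ℂ)) - ∑ i, (y i : ℂ)) - r1 - r2 with hb₀
  have funeq : (fun t : ℝ => QtodaN m θ (Function.update x k t) y)
      = fun t : ℝ => Complex.exp (θ * t + b₀ - (c₀ * Complex.exp (-(t:ℂ)) + d₀ * Complex.exp (t:ℂ))) := by
    funext t
    unfold QtodaN
    congr 1
    have h1 : (∑ i, ((Function.update x k t i : ℝ) : ℂ)) = (t:ℂ) + ∑ i ∈ univ.erase k, (x i : ℂ) := by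
      have h := Finset.sum_update_of_mem (Finset.mem_univ k) x t
      rw [Finset.erase_eq]
      calc (∑ i, ((Function.update x k t i : ℝ) : ℂ))
          = ((∑ i, Function.update x k t i : ℝ) : ℂ) := by push_cast; rfl
        _ = ((t + ∑ i ∈ univ \ {k}, x i : ℝ) : ℂ) := by rw [h]
        _ = (t:ℂ) + ∑ i ∈ univ \ {k}, (x i : ℂ) := by push_cast; rfl
    have h2 : (∑ i : Fin (m+1), ((Real.exp (y i - Function.update x k t i.castSucc) : ℂ)
          + (Real.exp (Function.update x k t i.succ - y i) : ℂ)))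
        = (c₀ * Complex.exp (-(t:ℂ)) + r1) + (d₀ * Complex.exp (t:ℂ) + r2) := by
      rw [Finset.sum_add_distrib]
      congr 1
      · have : ∀ i : Fin (m+1), ((Real.exp (y i - Function.update x k t i.castSucc) : ℂ))
            = if i.castSucc = k then (Real.exp (y i) : ℂ) * Complex.exp (-(t:ℂ))
              else (Real.exp (y i - x i.castSucc) : ℂ) := by
          intro i
          rw [Function.update_apply]
          split_ifs with h
          · rw [show y i - t = y i + (-t) by ring, Real.exp_add]
            push_cast [Complex.ofReal_exp]
            ring
          · rfl
        rw [Finset.sum_congr rfl (fun i _ => this i), Finset.sum_ite, ← Finset.sum_mul]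
      · have : ∀ i : Fin (m+1), ((Real.exp (Function.update x k t i.succ - y i) : ℂ))
            = if i.succ = k then (Real.exp (-(y i)) : ℂ) * Complex.exp ((t:ℂ))
              else (Real.exp (x i.succ - y i) : ℂ) := by
          intro i
          rw [Function.update_apply]
          split_ifs with h
          · rw [show t - y i = -(y i) + t by ring, Real.exp_add]
            push_cast [Complex.ofReal_exp]
            ring
          · rfl
        rw [Finset.sum_congr rfl (fun i _ => this i), Finset.sum_ite, ← Finset.sum_mul]
    rw [h1, h2, hb₀]
    ring
  have hQ : Complex.exp (θ * (x k) + b₀ - (c₀ * Complex.exp (-((x k:ℝ):ℂ)) + d₀ * Complex.exp ((x k:ℝ):ℂ)))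
      = QtodaN m θ x y := by
    have := congrFun funeq (x k)
    rw [Function.update_eq_self] at this
    exact this.symm
  have hA : c₀ * Complex.exp (-((x k:ℝ):ℂ))
      = ∑ i ∈ univ.filter (fun i : Fin (m+1) => i.castSucc = k), (Real.exp (y i - x i.castSucc) : ℂ) := by
    rw [hc₀, Finset.sum_mul]
    refine Finset.sum_congr rfl fun i hi => ?_
    rw [Finset.mem_filter] at hi
    rw [hi.2, show y i - x k = y i + (-(x k)) by ring, Real.exp_add]
    push_cast [Complex.ofReal_exp]
    ring
  have hB : d₀ * Complex.exp ((x k:ℝ):ℂ)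
      = ∑ i ∈ univ.filter (fun i : Fin (m+1) => i.succ = k), (Real.exp (x i.succ - y i) : ℂ) := by
    rw [hd₀, Finset.sum_mul]
    refine Finset.sum_congr rfl fun i hi => ?_
    rw [Finset.mem_filter] at hi
    rw [hi.2, show x k - y i = -(y i) + x k by ring, Real.exp_add]
    push_cast [Complex.ofReal_exp]
    ring
  rw [pderiv2, funeq, master, hQ, hA, hB]

lemma pd2y (m : ℕ) (θ : ℂ) (x : Fin (m + 2) → ℝ) (y : Fin (m + 1) → ℝ) (k : Fin (m + 1)) :
    pderiv2 (fun y' => QtodaN m θ x y') k y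
    = ((θ + (Real.exp (y k - x k.castSucc) : ℂ) - (Real.exp (x k.succ - y k) : ℂ))^2
        - ((Real.exp (y k - x k.castSucc) : ℂ) + (Real.exp (x k.succ - y k) : ℂ)))
      * QtodaN m θ x y := by
  set c₁ : ℂ := (Real.exp (x k.succ) : ℂ) with hc₁
  set d₁ : ℂ := (Real.exp (-(x k.castSucc)) : ℂ) with hd₁
  set r : ℂ := ∑ i ∈ univ.filter (fun i : Fin (m+1) => ¬ i = k),
      ((Real.exp (y i - x i.castSucc) : ℂ) + (Real.exp (x i.succ - y i) : ℂ)) with hrr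
  set b₁ : ℂ := θ * ((∑ i, (x i : ℂ)) - ∑ i ∈ univ.erase k, (y i : ℂ)) - r with hb₁
  have funeq : (fun t : ℝ => QtodaN m θ x (Function.update y k t))
      = fun t : ℝ => Complex.exp ((-θ) * t + b₁ - (c₁ * Complex.exp (-(t:ℂ)) + d₁ * Complex.exp (t:ℂ))) := by
    funext t
    unfold QtodaN
    congr 1
    have h1 : (∑ i, ((Function.update y k t i : ℝ) : ℂ)) = (t:ℂ) + ∑ i ∈ univ.erase k, (y i : ℂ) := by
      have h := Finset.sum_update_of_mem (Finset.mem_univ k) y t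
      rw [Finset.erase_eq]
      calc (∑ i, ((Function.update y k t i : ℝ) : ℂ))
          = ((∑ i, Function.update y k t i : ℝ) : ℂ) := by push_cast; rfl
        _ = ((t + ∑ i ∈ univ \ {k}, y i : ℝ) : ℂ) := by rw [h]
        _ = (t:ℂ) + ∑ i ∈ univ \ {k}, (y i : ℂ) := by push_cast; rfl
    have h2 : (∑ i : Fin (m+1), ((Real.exp (Function.update y k t i - x i.castSucc) : ℂ)
          + (Real.exp (x i.succ - Function.update y k t i) : ℂ)))
        = (c₁ * Complex.exp (-(t:ℂ)) + d₁ * Complex.exp (t:ℂ)) + r := by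
      have key : ∀ i : Fin (m+1), ((Real.exp (Function.update y k t i - x i.castSucc) : ℂ)
            + (Real.exp (x i.succ - Function.update y k t i) : ℂ))
          = if i = k then (c₁ * Complex.exp (-(t:ℂ)) + d₁ * Complex.exp (t:ℂ))
            else ((Real.exp (y i - x i.castSucc) : ℂ) + (Real.exp (x i.succ - y i) : ℂ)) := by
        intro i
        rw [Function.update_apply]
        split_ifs with h
        · subst h
          rw [show t - x i.castSucc = -(x i.castSucc) + t by ring,
            show x i.succ - t = x i.succ + (-t) by ring, Real.exp_add, Real.exp_add, hc₁, hd₁]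
          push_cast [Complex.ofReal_exp]
          ring
        · rfl
      rw [Finset.sum_congr rfl (fun i _ => key i), Finset.sum_ite, Finset.sum_const,
        Finset.filter_eq', if_pos (Finset.mem_univ k), Finset.card_singleton, one_smul]
    rw [h1, h2, hb₁]
    ring
  have hQ : Complex.exp ((-θ) * (y k) + b₁ - (c₁ * Complex.exp (-((y k:ℝ):ℂ)) + d₁ * Complex.exp ((y k:ℝ):ℂ)))
      = QtodaN m θ x y := by
    have := congrFun funeq (y k)
    rw [Function.update_eq_self] at this
    exact this.symm
  have hA : d₁ * Complex.exp ((y k:ℝ):ℂ) = (Real.exp (y k - x k.castSucc) : ℂ) := by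
    rw [hd₁, show y k - x k.castSucc = -(x k.castSucc) + y k by ring, Real.exp_add]
    push_cast [Complex.ofReal_exp]
    ring
  have hB : c₁ * Complex.exp (-((y k:ℝ):ℂ)) = (Real.exp (x k.succ - y k) : ℂ) := by
    rw [hc₁, show x k.succ - y k = x k.succ + (-(y k)) by ring, Real.exp_add]
    push_cast [Complex.ofReal_exp]
    ring
  rw [pderiv2, funeq, master, hQ, hA, hB]
  ring

lemma sq_sum_subsingle {α : Type*} {s : Finset α} (h : ∀ i ∈ s, ∀ j ∈ s, i = j) (f : α → ℂ) :
    (∑ i ∈ s, f i)^2 = ∑ i ∈ s, (f i)^2 := by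
  classical
  rcases s.eq_empty_or_nonempty with h0 | ⟨i, hi⟩
  · simp [h0]
  · have : s = {i} := Finset.eq_singleton_iff_unique_mem.mpr ⟨hi, fun j hj => h j hj i hi⟩
    simp [this]

/-- Kernel intertwining identity for the quantum Toda chain, general `n = m+2 ≥ 2`:
`(H^{(n)}_x - θ²) Q_θ(x,y) = H^{(n-1)}_y Q_θ(x,y)` pointwise, where
`H^{(k)} = Σ ∂²ᵢ - 2Σ e^{x_{i+1}-x_i}`. -/
theorem toda_intertwining (m : ℕ) (θ : ℂ) (x : Fin (m + 2) → ℝ) (y : Fin (m + 1) → ℝ) :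
    (∑ i : Fin (m + 2), pderiv2 (fun x' => QtodaN m θ x' y) i x)
      - 2 * (∑ i : Fin (m + 1), (Real.exp (x i.succ - x i.castSucc) : ℂ)) * QtodaN m θ x y
      - θ ^ 2 * QtodaN m θ x y
    = (∑ i : Fin (m + 1), pderiv2 (fun y' => QtodaN m θ x y') i y)
      - 2 * (∑ i : Fin m, (Real.exp (y i.succ - y i.castSucc) : ℂ)) * QtodaN m θ x y := by
  set Q : ℂ := QtodaN m θ x y with hQdef
  set a : Fin (m+1) → ℂ := fun i => (Real.exp (y i - x i.castSucc) : ℂ) with ha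
  set b : Fin (m+1) → ℂ := fun i => (Real.exp (x i.succ - y i) : ℂ) with hb
  set A : Fin (m+2) → ℂ := fun k => ∑ i ∈ univ.filter (fun i : Fin (m+1) => i.castSucc = k), a i with hA
  set B : Fin (m+2) → ℂ := fun k => ∑ i ∈ univ.filter (fun i : Fin (m+1) => i.succ = k), b i with hB
  have hx : (∑ k : Fin (m + 2), pderiv2 (fun x' => QtodaN m θ x' y) k x)
      = (∑ k : Fin (m+2), ((θ + A k - B k)^2 - (A k + B k))) * Q := by
    rw [Finset.sum_mul]
    exact Finset.sum_congr rfl fun k _ => pd2x m θ x y k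
  have hy : (∑ k : Fin (m + 1), pderiv2 (fun y' => QtodaN m θ x y') k y)
      = (∑ k : Fin (m+1), ((θ + a k - b k)^2 - (a k + b k))) * Q := by
    rw [Finset.sum_mul]
    exact Finset.sum_congr rfl fun k _ => pd2y m θ x y k
  have hP : (∑ i : Fin (m + 1), (Real.exp (x i.succ - x i.castSucc) : ℂ)) = ∑ i, a i * b i := by
    refine Finset.sum_congr rfl fun i _ => ?_
    simp only [ha, hb]
    rw [show x i.succ - x i.castSucc = (y i - x i.castSucc) + (x i.succ - y i) from by ring,
      Real.exp_add, Complex.ofReal_mul]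
  have hR : (∑ i : Fin m, (Real.exp (y i.succ - y i.castSucc) : ℂ)) = ∑ k : Fin (m+2), A k * B k := by
    have step1 : ∑ k : Fin (m+2), A k * B k = ∑ j : Fin (m+1), A j.succ * b j := by
      rw [← Finset.sum_fiberwise univ Fin.succ (fun j => A j.succ * b j)]
      refine Finset.sum_congr rfl fun k _ => ?_
      rw [hB, Finset.mul_sum]
      refine Finset.sum_congr rfl fun j hj => ?_
      rw [Finset.mem_filter] at hj
      rw [hj.2]
    rw [step1, Fin.sum_univ_castSucc (f := fun j : Fin (m+1) => A j.succ * b j)]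
    have hlast : A (Fin.last m).succ = 0 := by
      rw [hA]
      convert Finset.sum_empty
      rw [Finset.filter_eq_empty_iff]
      intro i _
      rw [Fin.succ_last]
      exact Fin.ne_of_lt (Fin.castSucc_lt_last i)
    rw [hlast, zero_mul, add_zero]
    refine Finset.sum_congr rfl fun i _ => ?_
    have hfilt : univ.filter (fun i' : Fin (m+1) => i'.castSucc = (i.succ).castSucc)
        = {i.succ} := by
      ext i'
      simp only [Finset.mem_filter, Finset.mem_univ, true_and, Finset.mem_singleton, Fin.castSucc_inj]
    have hAi : A (i.castSucc).succ = a i.succ := by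
      rw [hA]
      show (∑ i' ∈ univ.filter (fun i' : Fin (m+1) => i'.castSucc = (i.castSucc).succ), a i')
        = a i.succ
      rw [Fin.succ_castSucc, hfilt, Finset.sum_singleton]
    rw [hAi]
    simp only [ha, hb]
    rw [Fin.succ_castSucc,
      show y i.succ - y i.castSucc
        = (y i.succ - x (i.succ).castSucc) + (x (i.succ).castSucc - y i.castSucc) from by ring,
      Real.exp_add, Complex.ofReal_mul]
  rw [hx, hy, hP, hR]
  have hsub : ∀ (g : Fin (m+1) → Fin (m+2)), Function.Injective g →
      ∀ k, ∀ i ∈ univ.filter (fun i : Fin (m+1) => g i = k),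
        ∀ j ∈ univ.filter (fun i : Fin (m+1) => g i = k), i = j := by
    intro g hg k i hi j hj
    rw [Finset.mem_filter] at hi hj
    exact hg (hi.2.trans hj.2.symm)
  have hAa : ∑ k : Fin (m+2), A k = ∑ i, a i := Finset.sum_fiberwise univ Fin.castSucc a
  have hBb : ∑ k : Fin (m+2), B k = ∑ i, b i := Finset.sum_fiberwise univ Fin.succ b
  have hA2 : ∑ k : Fin (m+2), (A k)^2 = ∑ i, (a i)^2 := by
    rw [← Finset.sum_fiberwise univ Fin.castSucc (fun i => (a i)^2)]
    exact Finset.sum_congr rfl fun k _ =>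
      sq_sum_subsingle (hsub Fin.castSucc (Fin.castSucc_injective _) k) a
  have hB2 : ∑ k : Fin (m+2), (B k)^2 = ∑ i, (b i)^2 := by
    rw [← Finset.sum_fiberwise univ Fin.succ (fun i => (b i)^2)]
    exact Finset.sum_congr rfl fun k _ =>
      sq_sum_subsingle (hsub Fin.succ (Fin.succ_injective _) k) b
  have expand : ∀ (n : ℕ) (u v : Fin n → ℂ),
      ∑ k, ((θ + u k - v k)^2 - (u k + v k))
      = (n : ℂ) * θ^2 + ∑ k, (u k)^2 + ∑ k, (v k)^2 + 2*θ*(∑ k, u k) - 2*θ*(∑ k, v k)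
        - 2*(∑ k, u k * v k) - (∑ k, u k) - (∑ k, v k) := by
    intro n u v
    have : ∀ k, (θ + u k - v k)^2 - (u k + v k)
        = θ^2 + (u k)^2 + (v k)^2 + 2*θ*(u k) - 2*θ*(v k) - 2*(u k * v k) - u k - v k :=
      fun k => by ring
    rw [Finset.sum_congr rfl fun k _ => this k]
    simp only [Finset.sum_add_distrib, Finset.sum_sub_distrib, ← Finset.mul_sum,
      Finset.sum_const, Finset.card_univ, Fintype.card_fin, nsmul_eq_mul]
  have key : (∑ k : Fin (m+2), ((θ + A k - B k)^2 - (A k + B k))) - 2*(∑ i, a i * b i) - θ^2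
      = (∑ k : Fin (m+1), ((θ + a k - b k)^2 - (a k + b k))) - 2*(∑ k : Fin (m+2), A k * B k) := by
    rw [expand (m+2) A B, expand (m+1) a b, hAa, hBb, hA2, hB2]
    push_cast
    ring
  linear_combination Q * key
end

section
/- (n = 2 asymptotics of the Whittaker function.) For λ_1 > λ_2 and x = (x_1, x_2), define ψ_λ(x) = ∫_ℝ exp(λ_2(x_1+x_2−y) + λ_1 y − e^{y−x_1} − e^{x_2−y}) dy. Then e^{−λ_1 x_1 − λ_2 x_2} ψ_λ(x) ≤ Γ(λ_1 − λ_2) for all x, and lim_{x_1 − x_2 → +∞} e^{−λ_1 x_1 − λ_2 x_2} ψ_λ(x) = Γ(λ_1 − λ_2). -/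
open Filter

open Real MeasureTheory Set in
private lemma gamma_as_line_integral (s : ℝ) (hs : 0 < s) :
    Real.Gamma s = ∫ t : ℝ, Real.exp (s * t - Real.exp t) := by
  rw [Real.Gamma_eq_integral hs]
  have himg : Real.exp '' Set.univ = Set.Ioi (0:ℝ) := by
    rw [Set.image_univ, Real.range_exp]
  rw [← himg, integral_image_eq_integral_abs_deriv_smul MeasurableSet.univ
    (fun x _ => (Real.hasDerivAt_exp x).hasDerivWithinAt)
    (Real.exp_injective.injOn) (fun x => Real.exp (-x) * x ^ (s-1))]
  rw [MeasureTheory.setIntegral_univ]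
  congr 1; ext t
  rw [Real.rpow_def_of_pos (Real.exp_pos t), Real.log_exp, abs_of_pos (Real.exp_pos t),
    smul_eq_mul, ← Real.exp_add, ← Real.exp_add]
  congr 1; ring

open Real MeasureTheory Set in
private lemma integrable_line (s : ℝ) (hs : 0 < s) :
    MeasureTheory.Integrable (fun t : ℝ => Real.exp (s * t - Real.exp t)) := by
  have himg : Real.exp '' Set.univ = Set.Ioi (0:ℝ) := by
    rw [Set.image_univ, Real.range_exp]
  have h1 := Real.GammaIntegral_convergent hs
  rw [← himg, integrableOn_image_iff_integrableOn_abs_deriv_smul MeasurableSet.univ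
    (fun x _ => (Real.hasDerivAt_exp x).hasDerivWithinAt)
    (Real.exp_injective.injOn) (fun x => Real.exp (-x) * x ^ (s-1))] at h1
  rw [integrableOn_univ] at h1
  convert h1 using 2 with t
  rw [Real.rpow_def_of_pos (Real.exp_pos t), Real.log_exp, abs_of_pos (Real.exp_pos t),
    smul_eq_mul, ← Real.exp_add, ← Real.exp_add]
  congr 1; ring

open Real MeasureTheory in
private lemma integrable_G (s a : ℝ)
    (hint : MeasureTheory.Integrable (fun t : ℝ => Real.exp (s * t - Real.exp t))) :
    MeasureTheory.Integrable
      (fun t : ℝ => Real.exp (s * t - Real.exp t - Real.exp (-a - t))) := by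
  refine hint.mono' ?_ ?_
  · exact (Continuous.rexp (by continuity)).aestronglyMeasurable
  · filter_upwards with t
    rw [Real.norm_eq_abs, abs_of_pos (Real.exp_pos _)]
    exact Real.exp_le_exp.2 (by nlinarith [Real.exp_pos (-a - t)])

open Real MeasureTheory in
private lemma G_le (s a : ℝ)
    (hint : MeasureTheory.Integrable (fun t : ℝ => Real.exp (s * t - Real.exp t))) :
    (∫ t : ℝ, Real.exp (s * t - Real.exp t - Real.exp (-a - t)))
      ≤ ∫ t : ℝ, Real.exp (s * t - Real.exp t) := by
  refine integral_mono (integrable_G s a hint) hint fun t => ?_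
  exact Real.exp_le_exp.2 (by nlinarith [Real.exp_pos (-a - t)])

open Real MeasureTheory in
private lemma G_tendsto (s : ℝ)
    (hint : MeasureTheory.Integrable (fun t : ℝ => Real.exp (s * t - Real.exp t))) :
    Tendsto (fun a : ℝ => ∫ t : ℝ, Real.exp (s * t - Real.exp t - Real.exp (-a - t)))
      atTop (nhds (∫ t : ℝ, Real.exp (s * t - Real.exp t))) := by
  refine tendsto_integral_filter_of_dominated_convergence
    (fun t => Real.exp (s * t - Real.exp t)) ?_ ?_ hint ?_
  · filter_upwards with a
    exact (Continuous.rexp (by continuity)).aestronglyMeasurable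
  · filter_upwards with a
    filter_upwards with t
    rw [Real.norm_eq_abs, abs_of_pos (Real.exp_pos _)]
    exact Real.exp_le_exp.2 (by nlinarith [Real.exp_pos (-a - t)])
  · filter_upwards with t
    have h1 : Tendsto (fun a : ℝ => Real.exp (-a - t)) atTop (nhds 0) := by
      refine Real.tendsto_exp_atBot.comp ?_
      exact tendsto_atBot_add_const_right _ _ tendsto_neg_atTop_atBot
    have h2 : Tendsto (fun a : ℝ => s * t - Real.exp t - Real.exp (-a - t)) atTop
        (nhds (s * t - Real.exp t)) := by
      simpa using (tendsto_const_nhds.sub h1)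
    exact (Real.continuous_exp.continuousAt.tendsto).comp h2

/-- The `GL(2)` Whittaker function
`ψ_λ(x) = ∫ exp(λ₂(x₁+x₂-y) + λ₁y - e^{y-x₁} - e^{x₂-y}) dy`. -/
noncomputable def psiWhit2 (l1 l2 x1 x2 : ℝ) : ℝ :=
  ∫ y : ℝ, Real.exp (l2 * (x1 + x2 - y) + l1 * y - Real.exp (y - x1) - Real.exp (x2 - y))

private lemma psi_rw (l1 l2 x1 x2 : ℝ) :
    Real.exp (-l1 * x1 - l2 * x2) * psiWhit2 l1 l2 x1 x2 =
      ∫ t : ℝ, Real.exp ((l1 - l2) * t - Real.exp t - Real.exp (-(x1 - x2) - t)) := by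
  unfold psiWhit2
  rw [← MeasureTheory.integral_add_right_eq_self
    (fun y => Real.exp (l2 * (x1 + x2 - y) + l1 * y - Real.exp (y - x1) - Real.exp (x2 - y))) x1,
    ← MeasureTheory.integral_const_mul]
  congr 1; ext t
  rw [← Real.exp_add,
    show t + x1 - x1 = t by ring, show x2 - (t + x1) = -(x1 - x2) - t by ring]
  congr 1; ring

/-- For `λ₁ > λ₂`: `e^{-λ₁x₁-λ₂x₂} ψ_λ(x) ≤ Γ(λ₁-λ₂)` for all `x`, and
`e^{-λ₁x₁-λ₂x₂} ψ_λ(x) → Γ(λ₁-λ₂)` as `x₁ - x₂ → +∞`. -/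
theorem whittaker_asymptotics (l1 l2 : ℝ) (h : l2 < l1) :
    (∀ x1 x2 : ℝ,
      Real.exp (-l1 * x1 - l2 * x2) * psiWhit2 l1 l2 x1 x2 ≤ Real.Gamma (l1 - l2)) ∧
    Tendsto (fun p : ℝ × ℝ => Real.exp (-l1 * p.1 - l2 * p.2) * psiWhit2 l1 l2 p.1 p.2)
      (Filter.comap (fun p : ℝ × ℝ => p.1 - p.2) atTop)
      (nhds (Real.Gamma (l1 - l2))) := by
  have hs : 0 < l1 - l2 := sub_pos.2 h
  have hint := integrable_line (l1 - l2) hs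
  have hgamma := gamma_as_line_integral (l1 - l2) hs
  constructor
  · intro x1 x2
    rw [psi_rw, hgamma]
    exact G_le (l1 - l2) (x1 - x2) hint
  · have hG : Tendsto
        (fun a : ℝ => ∫ t : ℝ, Real.exp ((l1 - l2) * t - Real.exp t - Real.exp (-a - t)))
        atTop (nhds (Real.Gamma (l1 - l2))) := by
      rw [hgamma]; exact G_tendsto (l1 - l2) hint
    have := hG.comp (tendsto_comap (f := fun p : ℝ × ℝ => p.1 - p.2))
    refine this.congr fun p => ?_
    simp only [Function.comp]
    rw [psi_rw]
end
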